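/- arXiv:2503.01021 — 3 statements merged into one kernel-verified Lean document; each statement's English description precedes it below -/
import Mathlib

section
/- Let I be a feasible RMP instance with capacities in {1,2}, at least one double room, and k := 2R − n_F − n_M ≥ 1 auxiliary vertices. Then the graph G_I contains a perfect matching. -/
/-- The auxiliary graph `G_I` of the RMP matching construction: vertices are the
female patients (`Fin nF`), the male patients (`Fin nM`) and `k` auxiliary vertices
(`Fin k`, of which the first `a` form `X₁` and the rest form `X₂`).  Edges: all pairs
of female patients, all pairs of male patients, all patient–auxiliary pairs, and all
pairs of auxiliary vertices in `X₂`. -/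
def GI (nF nM k a : ℕ) : SimpleGraph (Fin nF ⊕ Fin nM ⊕ Fin k) :=
  SimpleGraph.fromRel fun u v =>
    match u, v with
    | Sum.inl _, Sum.inl _ => True
    | Sum.inr (Sum.inl _), Sum.inr (Sum.inl _) => True
    | Sum.inl _, Sum.inr (Sum.inr _) => True
    | Sum.inr (Sum.inl _), Sum.inr (Sum.inr _) => True
    | Sum.inr (Sum.inr x), Sum.inr (Sum.inr y) => a ≤ x.val ∧ a ≤ y.val
    | _, _ => False

/-- Pairing of consecutive elements within a block `[b, n)` of even length. -/
def pairUp (b j : ℕ) : ℕ := if (j - b) % 2 = 0 then j + 1 else j - 1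

lemma pairUp_lt {b n j : ℕ} (hb : b ≤ j) (hj : j < n) (hn : (n - b) % 2 = 0) :
    pairUp b j < n := by unfold pairUp; split_ifs <;> omega

lemma pairUp_ge {b j : ℕ} (hb : b ≤ j) : b ≤ pairUp b j := by
  unfold pairUp; split_ifs <;> omega

lemma pairUp_invol {b n j : ℕ} (hb : b ≤ j) (hj : j < n) (hn : (n - b) % 2 = 0) :
    pairUp b (pairUp b j) = j := by
  unfold pairUp; split_ifs <;> omega

lemma pairUp_ne {b j : ℕ} (hb : b ≤ j) : pairUp b j ≠ j := by
  unfold pairUp; split_ifs <;> omega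

/-- A fixed-point-free adjacent involution yields a perfect matching. -/
lemma perfect_of_involution {V : Type*} (G : SimpleGraph V) (f : V → V)
    (h1 : ∀ v, f (f v) = v) (h2 : ∀ v, G.Adj v (f v)) :
    ∃ m : G.Subgraph, m.IsPerfectMatching := by
  refine ⟨⟨Set.univ, fun v w => f v = w, ?_, fun _ => Set.mem_univ _, ?_⟩,
    fun v _ => ⟨f v, rfl, fun y hy => Eq.symm hy⟩, fun v => Set.mem_univ v⟩
  · rintro v w rfl; exact h2 v
  · refine ⟨?_⟩; rintro v w rfl; rw [h1]

/-- The explicit matching map. -/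
def mFun (nF nM k bF bM t : ℕ) (h1 : bF ≤ nF) (h2 : bM ≤ nM) (h3 : bF + bM = t)
    (h4 : (nF - bF) % 2 = 0) (h5 : (nM - bM) % 2 = 0) (h6 : t ≤ k)
    (h7 : (k - t) % 2 = 0) :
    Fin nF ⊕ Fin nM ⊕ Fin k → Fin nF ⊕ Fin nM ⊕ Fin k := fun v =>
  match v with
  | Sum.inl i =>
      if h : i.val < bF then Sum.inr (Sum.inr ⟨i.val, by omega⟩)
      else Sum.inl ⟨pairUp bF i.val, pairUp_lt (by omega) i.isLt h4⟩
  | Sum.inr (Sum.inl i) =>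
      if h : i.val < bM then Sum.inr (Sum.inr ⟨bF + i.val, by omega⟩)
      else Sum.inr (Sum.inl ⟨pairUp bM i.val, pairUp_lt (by omega) i.isLt h5⟩)
  | Sum.inr (Sum.inr x) =>
      if h : x.val < bF then Sum.inl ⟨x.val, by omega⟩
      else if h' : x.val < t then Sum.inr (Sum.inl ⟨x.val - bF, by omega⟩)
      else Sum.inr (Sum.inr ⟨pairUp t x.val, pairUp_lt (by omega) x.isLt h7⟩)

/-- For a feasible RMP instance with capacities in {1,2}, at least one
double room, and k = 2R − n_F − n_M ≥ 1 auxiliary vertices, the graph G_I contains a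
perfect matching. -/
theorem stmt_2 (nF nM R1 R2 k a : ℕ) (hR2 : 1 ≤ R2)
    (hfeas : nF + nM ≤ R1 + 2 * R2)
    (hk : k = 2 * (R1 + R2) - (nF + nM)) (hk1 : 1 ≤ k)
    (ha : a = nF + nM - 2 * R2) (haR1 : a ≤ R1) :
    ∃ m : (GI nF nM k a).Subgraph, m.IsPerfectMatching := by
  set t := max a (nF % 2 + nM % 2) with ht
  set bF := min nF (t - nM % 2) with hbF
  set bM := t - bF with hbM
  have h1 : bF ≤ nF := by omega
  have h2 : bM ≤ nM := by omega
  have h3 : bF + bM = t := by omega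
  have h4 : (nF - bF) % 2 = 0 := by omega
  have h5 : (nM - bM) % 2 = 0 := by omega
  have hat : a ≤ t := by omega
  have h6 : t ≤ k := by omega
  have h7 : (k - t) % 2 = 0 := by omega
  apply perfect_of_involution _ (mFun nF nM k bF bM t h1 h2 h3 h4 h5 h6 h7)
  · intro v
    rcases v with i | i | x
    · by_cases h : i.val < bF
      · simp only [mFun, dif_pos h]
      · have hb : bF ≤ i.val := Nat.not_lt.1 h
        have hg : ¬ pairUp bF i.val < bF := Nat.not_lt.2 (pairUp_ge hb)
        simp only [mFun, dif_neg h, dif_neg hg]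
        exact congrArg Sum.inl (Fin.ext (pairUp_invol hb i.isLt h4))
    · by_cases h : i.val < bM
      · have c1 : ¬ bF + i.val < bF := by omega
        have c2 : bF + i.val < t := by omega
        simp only [mFun, dif_pos h, dif_neg c1, dif_pos c2]
        exact congrArg (fun j => Sum.inr (Sum.inl j)) (Fin.ext (show bF + i.val - bF = i.val by omega))
      · have hb : bM ≤ i.val := Nat.not_lt.1 h
        have hg : ¬ pairUp bM i.val < bM := Nat.not_lt.2 (pairUp_ge hb)
        simp only [mFun, dif_neg h, dif_neg hg]
        exact congrArg (fun j => Sum.inr (Sum.inl j)) (Fin.ext (pairUp_invol hb i.isLt h5))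
    · by_cases h : x.val < bF
      · simp only [mFun, dif_pos h]
      · by_cases h' : x.val < t
        · have c : x.val - bF < bM := by omega
          simp only [mFun, dif_neg h, dif_pos h', dif_pos c]
          exact congrArg (fun j => Sum.inr (Sum.inr j)) (Fin.ext (show bF + (x.val - bF) = x.val by omega))
        · have hb : t ≤ x.val := Nat.not_lt.1 h'
          have c1 : ¬ pairUp t x.val < bF := by have := pairUp_ge hb; omega
          have c2 : ¬ pairUp t x.val < t := Nat.not_lt.2 (pairUp_ge hb)
          simp only [mFun, dif_neg h, dif_neg h', dif_neg c1, dif_neg c2]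
          exact congrArg (fun j => Sum.inr (Sum.inr j)) (Fin.ext (pairUp_invol hb x.isLt h7))
  · intro v
    rcases v with i | i | x
    · by_cases h : i.val < bF
      · simp only [mFun, dif_pos h, GI, SimpleGraph.fromRel_adj]
        simp
      · have hb : bF ≤ i.val := Nat.not_lt.1 h
        have hne : pairUp bF i.val ≠ i.val := pairUp_ne hb
        simp only [mFun, dif_neg h, GI, SimpleGraph.fromRel_adj]
        refine ⟨fun hcontra => ?_, Or.inl trivial⟩
        have := Sum.inl.inj hcontra
        exact hne (congrArg Fin.val this).symm
    · by_cases h : i.val < bM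
      · simp only [mFun, dif_pos h, GI, SimpleGraph.fromRel_adj]
        simp
      · have hb : bM ≤ i.val := Nat.not_lt.1 h
        have hne : pairUp bM i.val ≠ i.val := pairUp_ne hb
        simp only [mFun, dif_neg h, GI, SimpleGraph.fromRel_adj]
        refine ⟨fun hcontra => ?_, Or.inl trivial⟩
        have := Sum.inr.inj hcontra
        have := Sum.inl.inj this
        exact hne (congrArg Fin.val this).symm
    · by_cases h : x.val < bF
      · simp only [mFun, dif_pos h, GI, SimpleGraph.fromRel_adj]
        simp
      · by_cases h' : x.val < t
        · simp only [mFun, dif_neg h, dif_pos h', GI, SimpleGraph.fromRel_adj]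
          simp
        · have hb : t ≤ x.val := Nat.not_lt.1 h'
          have hne : pairUp t x.val ≠ x.val := pairUp_ne hb
          have hg : t ≤ pairUp t x.val := pairUp_ge hb
          simp only [mFun, dif_neg h, dif_neg h', GI, SimpleGraph.fromRel_adj]
          refine ⟨fun hcontra => ?_, Or.inl ⟨by omega, by omega⟩⟩
          have := Sum.inr.inj hcontra
          have := Sum.inr.inj this
          exact hne (congrArg Fin.val this).symm
end

section
/- If n_F + n_M ≤ 2R_2 + R_1 and additionally at most R_1 + R_2 rooms are needed after pairing greedily (i.e., ⌈n_F/2⌉ + ⌈n_M/2⌉ ≤ R_1 + R_2), then the RMP instance with capacities in {1,2} is feasible. -/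
open Finset

/-- Capacity of the rooms: rooms `0,…,R1-1` are single rooms, rooms `R1,…,R1+R2-1`
are double rooms. -/
def roomCap (R1 R2 : ℕ) (r : Fin (R1 + R2)) : ℕ := if (r : ℕ) < R1 then 1 else 2

/-- A feasible room assignment: capacities are respected and rooms are sex-homogeneous. -/
def FeasibleAssign {P : Type*} [Fintype P] [DecidableEq P] (female : P → Bool)
    (R1 R2 : ℕ) (f : P → Fin (R1 + R2)) : Prop :=
  (∀ r, (univ.filter fun p => f p = r).card ≤ roomCap R1 R2 r) ∧
    ∀ p q, f p = f q → female p = female q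

/-- Room for virtual patient `n`: patients `0..nF-1` are female, `nF..` male.
Females use singles `0..sF-1` then doubles `R1..R1+dF-1`; males use singles
`sF..sF+sM-1` then doubles `R1+dF..`. -/
def gfun (R1 sF dF sM nF : ℕ) (n : ℕ) : ℕ :=
  if n < nF then (if n < sF then n else R1 + (n - sF) / 2)
  else (if n - nF < sM then sF + (n - nF) else R1 + dF + (n - nF - sM) / 2)

lemma gfun_lt {R1 R2 sF dF sM dM nF nM : ℕ}
    (hs : sF + sM ≤ R1) (hd : dF + dM ≤ R2)
    (hF : nF ≤ sF + 2 * dF) (hM : nM ≤ sM + 2 * dM)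
    {n : ℕ} (hn : n < nF + nM) : gfun R1 sF dF sM nF n < R1 + R2 := by
  unfold gfun; split_ifs <;> omega

lemma gfun_single_inj {R1 sF dF sM dM nF nM : ℕ}
    (hs : sF + sM ≤ R1) (hd : dF + dM ≤ R2)
    (hF : nF ≤ sF + 2 * dF) (hM : nM ≤ sM + 2 * dM)
    {n m : ℕ} (hn : n < nF + nM) (hm : m < nF + nM)
    (h : gfun R1 sF dF sM nF n = gfun R1 sF dF sM nF m)
    (hr : gfun R1 sF dF sM nF n < R1) : n = m := by
  unfold gfun at h hr; split_ifs at h hr <;> omega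

lemma gfun_double {R1 sF dF sM dM nF nM : ℕ}
    (hs : sF + sM ≤ R1) (hd : dF + dM ≤ R2)
    (hF : nF ≤ sF + 2 * dF) (hM : nM ≤ sM + 2 * dM)
    {n k m : ℕ} (hn : n < nF + nM) (hk : k < nF + nM) (hm : m < nF + nM)
    (h1 : gfun R1 sF dF sM nF n = gfun R1 sF dF sM nF k)
    (h2 : gfun R1 sF dF sM nF n = gfun R1 sF dF sM nF m) :
    n = k ∨ n = m ∨ k = m := by
  unfold gfun at h1 h2; split_ifs at h1 h2 <;> omega

lemma gfun_ne {R1 sF dF sM dM nF nM : ℕ}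
    (hs : sF + sM ≤ R1) (hd : dF + dM ≤ R2)
    (hF : nF ≤ sF + 2 * dF) (hM : nM ≤ sM + 2 * dM)
    {n m : ℕ} (hn : n < nF) (hm1 : nF ≤ m) (hm2 : m < nF + nM) :
    gfun R1 sF dF sM nF n ≠ gfun R1 sF dF sM nF m := by
  unfold gfun; split_ifs <;> omega

lemma numeric (R1 R2 nF nM : ℕ) (h1 : nF + nM ≤ 2 * R2 + R1)
    (h2 : (nF + 1) / 2 + (nM + 1) / 2 ≤ R1 + R2) :
    ∃ sF dF sM dM, sF + sM ≤ R1 ∧ dF + dM ≤ R2 ∧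
      nF ≤ sF + 2 * dF ∧ nM ≤ sM + 2 * dM := by
  by_cases hc : R2 < nF / 2 + nM / 2
  · exact ⟨nF - 2 * (min (nF / 2) R2), min (nF / 2) R2,
      nM - 2 * (R2 - min (nF / 2) R2), R2 - min (nF / 2) R2, by omega⟩
  · refine ⟨nF % 2 - min (nF % 2) ((nF % 2 + nM % 2) - R1),
      nF / 2 + min (nF % 2) ((nF % 2 + nM % 2) - R1),
      nM % 2 - (((nF % 2 + nM % 2) - R1) - min (nF % 2) ((nF % 2 + nM % 2) - R1)),
      nM / 2 + (((nF % 2 + nM % 2) - R1) - min (nF % 2) ((nF % 2 + nM % 2) - R1)),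
      by omega⟩

/-- If `n_F + n_M ≤ 2R₂ + R₁` and `⌈n_F/2⌉ + ⌈n_M/2⌉ ≤ R₁ + R₂`, then the
RMP instance with capacities in {1,2} is feasible. -/
theorem stmt_14 {P : Type*} [Fintype P] [DecidableEq P] (female : P → Bool)
    (R1 R2 nF nM : ℕ)
    (hnF : nF = (univ.filter fun p : P => female p = true).card)
    (hnM : nM = (univ.filter fun p : P => female p = false).card)
    (h1 : nF + nM ≤ 2 * R2 + R1)
    (h2 : (nF + 1) / 2 + (nM + 1) / 2 ≤ R1 + R2) :
    ∃ f : P → Fin (R1 + R2), FeasibleAssign female R1 R2 f := by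
  obtain ⟨sF, dF, sM, dM, hs, hd, hF, hM⟩ := numeric R1 R2 nF nM h1 h2
  classical
  let F : Finset P := univ.filter fun p : P => female p = true
  let M : Finset P := univ.filter fun p : P => female p = false
  have hcF : F.card = nF := hnF.symm
  have hcM : M.card = nM := hnM.symm
  let e1 := F.equivFin
  let e2 := M.equivFin
  have memF : ∀ {p : P}, female p = true → p ∈ F := fun h => by
    simp [F, h]
  have memM : ∀ {p : P}, ¬ female p = true → p ∈ M := fun h => by
    simp [M]; simpa using h
  let idx : P → ℕ := fun p =>
    if h : female p = true then (e1 ⟨p, memF h⟩ : ℕ) else nF + (e2 ⟨p, memM h⟩ : ℕ)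
  have idx_ltF : ∀ {p : P} (h : female p = true), idx p < nF := by
    intro p h
    have h2 := (e1 ⟨p, memF h⟩).isLt
    simp only [idx, dif_pos h]
    exact lt_of_lt_of_eq h2 hcF
  have idx_geM : ∀ {p : P} (h : ¬ female p = true), nF ≤ idx p ∧ idx p < nF + nM := by
    intro p h
    have h2 := (e2 ⟨p, memM h⟩).isLt
    simp only [idx, dif_neg h]
    exact ⟨Nat.le_add_right _ _, Nat.add_lt_add_left (lt_of_lt_of_eq h2 hcM) _⟩
  have idx_lt : ∀ p : P, idx p < nF + nM := by
    intro p
    by_cases h : female p = true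
    · have := idx_ltF h; omega
    · exact (idx_geM h).2
  have idx_inj : Function.Injective idx := by
    intro p q h
    by_cases hp : female p = true <;> by_cases hq : female q = true
    · simp only [idx, dif_pos hp, dif_pos hq] at h
      have := e1.injective (Fin.val_injective h)
      exact congrArg Subtype.val this
    · have h1 := idx_ltF hp; have h2 := (idx_geM hq).1; omega
    · have h1 := idx_ltF hq; have h2 := (idx_geM hp).1; omega
    · simp only [idx, dif_neg hp, dif_neg hq] at h
      have := e2.injective (Fin.val_injective (Nat.add_left_cancel h))
      exact congrArg Subtype.val this
  refine ⟨fun p => ⟨gfun R1 sF dF sM nF (idx p), gfun_lt hs hd hF hM (idx_lt p)⟩, ?_, ?_⟩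
  · intro r
    unfold roomCap
    by_cases hr : (r : ℕ) < R1
    · rw [if_pos hr]
      apply Finset.card_le_one.mpr
      intro p hp q hq
      simp only [mem_filter] at hp hq
      have hp2 : gfun R1 sF dF sM nF (idx p) = (r : ℕ) := congrArg Fin.val hp.2
      have hq2 : gfun R1 sF dF sM nF (idx q) = (r : ℕ) := congrArg Fin.val hq.2
      apply idx_inj
      exact gfun_single_inj hs hd hF hM (idx_lt p) (idx_lt q)
        (hp2.trans hq2.symm) (hp2.trans_lt hr)
    · rw [if_neg hr]
      by_contra hcard
      push_neg at hcard
      obtain ⟨p, hp, q, hq, u, hu, hpq, hpu, hqu⟩ := Finset.two_lt_card.mp hcard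
      simp only [mem_filter] at hp hq hu
      have hp2 : gfun R1 sF dF sM nF (idx p) = (r : ℕ) := congrArg Fin.val hp.2
      have hq2 : gfun R1 sF dF sM nF (idx q) = (r : ℕ) := congrArg Fin.val hq.2
      have hu2 : gfun R1 sF dF sM nF (idx u) = (r : ℕ) := congrArg Fin.val hu.2
      have := gfun_double hs hd hF hM (idx_lt p) (idx_lt q) (idx_lt u)
        (hp2.trans hq2.symm) (hp2.trans hu2.symm)
      rcases this with h | h | h
      · exact hpq (idx_inj h)
      · exact hpu (idx_inj h)
      · exact hqu (idx_inj h)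
  · intro p q h
    have hval : gfun R1 sF dF sM nF (idx p) = gfun R1 sF dF sM nF (idx q) :=
      congrArg Fin.val h
    by_cases hp : female p = true <;> by_cases hq : female q = true
    · rw [hp, hq]
    · exact absurd hval (gfun_ne hs hd hF hM (idx_ltF hp) (idx_geM hq).1 (idx_geM hq).2)
    · exact absurd hval.symm (gfun_ne hs hd hF hM (idx_ltF hq) (idx_geM hp).1 (idx_geM hp).2)
    · simp [Bool.not_eq_true] at hp hq; rw [hp, hq]
end

section
/- In the graph G_I of the RMP matching construction with k ≥ 1 auxiliary vertices, for every vertex subset U, the graph G_I − U has at most |U| odd connected components. -/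
namespace GIAux

variable {nF nM k a : ℕ}

lemma adj_FF {i j : Fin nF} (h : i ≠ j) : (GI nF nM k a).Adj (.inl i) (.inl j) := by
  simp [GI, SimpleGraph.fromRel_adj, h]

lemma adj_MM {i j : Fin nM} (h : i ≠ j) :
    (GI nF nM k a).Adj (.inr (.inl i)) (.inr (.inl j)) := by
  simp [GI, SimpleGraph.fromRel_adj, h]

lemma adj_FX (i : Fin nF) (x : Fin k) : (GI nF nM k a).Adj (.inl i) (.inr (.inr x)) := by
  simp [GI, SimpleGraph.fromRel_adj]

lemma adj_MX (i : Fin nM) (x : Fin k) :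
    (GI nF nM k a).Adj (.inr (.inl i)) (.inr (.inr x)) := by
  simp [GI, SimpleGraph.fromRel_adj]

lemma adj_XX {x y : Fin k} (hx : a ≤ x.val) (hy : a ≤ y.val) (h : x ≠ y) :
    (GI nF nM k a).Adj (.inr (.inr x)) (.inr (.inr y)) := by
  simp [GI, SimpleGraph.fromRel_adj, h, hx, hy]

end GIAux

/-- In the graph `G_I` of the RMP matching construction with `k ≥ 1`
auxiliary vertices, for every vertex subset `U` the graph `G_I − U` has at most `|U|`
odd connected components. -/
theorem stmt_16 (nF nM R1 R2 k a : ℕ) (hR2 : 1 ≤ R2)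
    (hfeas : nF + nM ≤ R1 + 2 * R2)
    (hk : k = 2 * (R1 + R2) - (nF + nM)) (hk1 : 1 ≤ k)
    (ha : a = nF + nM - 2 * R2) (haR1 : a ≤ R1)
    (U : Set (Fin nF ⊕ Fin nM ⊕ Fin k)) :
    Nat.card {c : ((GI nF nM k a).induce Uᶜ).ConnectedComponent //
      Odd (Nat.card c.supp)} ≤ U.ncard := by
  classical
  set H := (GI nF nM k a).induce Uᶜ with hHdef
  set q := Nat.card {c : H.ConnectedComponent // Odd (Nat.card c.supp)} with hq
  -- parity of q versus |U|
  have htot : U.ncard + Uᶜ.ncard = nF + nM + k := by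
    rw [Set.ncard_add_ncard_compl U (Set.toFinite U)]
    simp [Nat.card_eq_fintype_card]
    omega
  have hUc : Nat.card ↥Uᶜ = Uᶜ.ncard := Nat.card_coe_set_eq _
  have hodd : Odd (Nat.card ↥Uᶜ) ↔ Odd q :=
    (SimpleGraph.odd_ncard_oddComponents H).symm
  have hpar : q % 2 = U.ncard % 2 := by
    rw [Nat.odd_iff, Nat.odd_iff] at hodd
    omega
  by_contra hcon
  push_neg at hcon
  -- adjacency transfer to the induced subgraph
  have hadj : ∀ u v : ↥Uᶜ, (GI nF nM k a).Adj ↑u ↑v → H.Adj u v := fun _ _ h => h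
  by_cases hPat : ∃ v : ↥Uᶜ, (∃ i, v.1 = Sum.inl i) ∨ (∃ j, v.1 = Sum.inr (Sum.inl j))
  · by_cases hAux : ∃ v : ↥Uᶜ, ∃ x : Fin k, v.1 = Sum.inr (Sum.inr x)
    · -- Case A: a patient and an auxiliary vertex survive; H is connected.
      obtain ⟨p, hp⟩ := hPat
      obtain ⟨xv, x, hx⟩ := hAux
      have hpx : ∀ u : ↥Uᶜ, ∀ y : Fin k, u.1 = Sum.inr (Sum.inr y) → H.Adj p u := by
        intro u y hy
        apply hadj
        rcases hp with ⟨i, hi⟩ | ⟨j, hj⟩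
        · rw [hi, hy]; exact GIAux.adj_FX i y
        · rw [hj, hy]; exact GIAux.adj_MX j y
      have key : ∀ u : ↥Uᶜ, H.Reachable u xv := by
        intro u
        rcases hu : u.1 with i | j | y
        · have h1 : H.Adj u xv := by
            apply hadj; rw [hu, hx]; exact GIAux.adj_FX i x
          exact h1.reachable
        · have h1 : H.Adj u xv := by
            apply hadj; rw [hu, hx]; exact GIAux.adj_MX j x
          exact h1.reachable
        · exact ((hpx u y hu).symm.reachable).trans (hpx xv x hx).reachable
      have hpre : H.Preconnected := fun u v => (key u).trans (key v).symm
      have hsub := hpre.subsingleton_connectedComponent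
      have hq1 : q ≤ 1 := by
        have h2 : q ≤ Nat.card Unit :=
          Nat.card_le_card_of_injective (fun _ => ())
            (fun x y _ => Subsingleton.elim x y)
        simpa using h2
      omega
    · -- Case B: no auxiliary vertex survives.
      push_neg at hAux
      have hXU : ∀ x : Fin k, Sum.inr (Sum.inr x) ∈ U := by
        intro x
        by_contra hxU
        exact hAux ⟨_, hxU⟩ x rfl
      have hkU : k ≤ U.ncard := by
        rw [← Nat.card_coe_set_eq]
        have h2 : Nat.card (Fin k) ≤ Nat.card ↥U := by
          apply Nat.card_le_card_of_injective
            (fun x : Fin k => (⟨Sum.inr (Sum.inr x), hXU x⟩ : ↥U))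
          intro x y hxy
          simpa using hxy
        simpa using h2
      -- q ≤ 2 via the map to Bool recording whether the component contains a female
      have hq2 : q ≤ 2 := by
        have h2 : Nat.card {c : H.ConnectedComponent // Odd (Nat.card c.supp)} ≤
            Nat.card Bool := by
          apply Nat.card_le_card_of_injective
            (fun c : {c : H.ConnectedComponent // Odd (Nat.card c.supp)} =>
              if (∃ v : ↥Uᶜ, (∃ i, v.1 = Sum.inl i) ∧
                H.connectedComponentMk v = ↑c) then true else false)
          intro c c' hcc
          dsimp only at hcc
          ext1
          by_cases h1 : (∃ v : ↥Uᶜ, (∃ i, v.1 = Sum.inl i) ∧ H.connectedComponentMk v = ↑c) <;>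
            by_cases h2 : (∃ v : ↥Uᶜ, (∃ i, v.1 = Sum.inl i) ∧ H.connectedComponentMk v = ↑c')
          · obtain ⟨v, ⟨i, hi⟩, hv⟩ := h1
            obtain ⟨v', ⟨i', hi'⟩, hv'⟩ := h2
            rw [← hv, ← hv']
            by_cases hvv : v = v'
            · rw [hvv]
            · apply SimpleGraph.ConnectedComponent.sound
              apply SimpleGraph.Adj.reachable
              apply hadj
              rw [hi, hi']
              apply GIAux.adj_FF
              intro hii
              exact hvv (Subtype.ext (by rw [hi, hi', hii]))
          · rw [if_pos h1, if_neg h2] at hcc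
            exact absurd hcc (by simp)
          · rw [if_neg h1, if_pos h2] at hcc
            exact absurd hcc (by simp)
          · -- both components have no female; their reps must be male
            obtain ⟨v, hv⟩ := (c : H.ConnectedComponent).exists_rep
            obtain ⟨v', hv'⟩ := (c' : H.ConnectedComponent).exists_rep
            obtain ⟨j, hj⟩ : ∃ j, v.1 = Sum.inr (Sum.inl j) := by
              rcases hvc : v.1 with i | j | y
              · exact absurd ⟨v, ⟨i, hvc⟩, hv⟩ h1
              · exact ⟨j, rfl⟩
              · exact absurd hvc (hAux v y)
            obtain ⟨j', hj'⟩ : ∃ j', v'.1 = Sum.inr (Sum.inl j') := by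
              rcases hvc : v'.1 with i | j | y
              · exact absurd ⟨v', ⟨i, hvc⟩, hv'⟩ h2
              · exact ⟨j, rfl⟩
              · exact absurd hvc (hAux v' y)
            rw [← hv, ← hv']
            by_cases hvv : v = v'
            · rw [hvv]
            · apply SimpleGraph.ConnectedComponent.sound
              apply SimpleGraph.Adj.reachable
              apply hadj
              rw [hj, hj']
              apply GIAux.adj_MM
              intro hjj
              exact hvv (Subtype.ext (by rw [hj, hj', hjj]))
        calc q ≤ Nat.card Bool := h2
          _ = 2 := by simp
      omega
  · -- Case C: no patient survives.
    push_neg at hPat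
    have hPU1 : ∀ i : Fin nF, Sum.inl i ∈ U := by
      intro i
      by_contra hiU
      exact (hPat ⟨_, hiU⟩).1 i rfl
    have hPU2 : ∀ j : Fin nM, Sum.inr (Sum.inl j) ∈ U := by
      intro j
      by_contra hjU
      exact (hPat ⟨_, hjU⟩).2 j rfl
    -- |U| ≥ nF + nM
    have hnU : nF + nM ≤ U.ncard := by
      rw [← Nat.card_coe_set_eq]
      have h2 : Nat.card (Fin nF ⊕ Fin nM) ≤ Nat.card ↥U := by
        apply Nat.card_le_card_of_injective
          (fun w : Fin nF ⊕ Fin nM =>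
            (⟨Sum.map id Sum.inl w, by rcases w with i | j
                                       · exact hPU1 i
                                       · exact hPU2 j⟩ : ↥U))
        intro w w' hww
        exact (Function.Injective.sumMap (fun _ _ h => h) Sum.inl_injective)
          (congrArg Subtype.val hww)
      calc nF + nM = Nat.card (Fin nF ⊕ Fin nM) := by
            rw [Nat.card_sum]; simp
        _ ≤ Nat.card ↥U := h2
    -- s counts the surviving X₁-vertices
    set s := Nat.card {v : ↥Uᶜ // ∃ x : Fin k, v.1 = Sum.inr (Sum.inr x) ∧ x.val < a}
      with hs
    have hak : a ≤ k := by omega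
    have hsa : s ≤ a := by
      have h2 : s ≤ Nat.card {x : Fin k // x.val < a} := by
        rw [hs]
        apply Nat.card_le_card_of_injective
          (fun v => (⟨v.2.choose, v.2.choose_spec.2⟩ : {x : Fin k // x.val < a}))
        intro v v' hvv
        have h3 := v.2.choose_spec
        have h4 := v'.2.choose_spec
        have h5 : v.2.choose = v'.2.choose := congrArg Subtype.val hvv
        apply Subtype.ext
        apply Subtype.ext
        rw [h3.1, h4.1, h5]
      have h3 : Nat.card {x : Fin k // x.val < a} = a := by
        have e : {x : Fin k // x.val < a} ≃ Fin a :=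
          { toFun := fun y => ⟨y.1.1, y.2⟩
            invFun := fun z => ⟨⟨z.1, lt_of_lt_of_le z.2 hak⟩, z.2⟩
            left_inv := fun y => by ext; rfl
            right_inv := fun z => rfl }
        rw [Nat.card_congr e]
        simp
      omega
    -- q ≤ s + 1
    have hqs : q ≤ s + 1 := by
      have h2 : Nat.card {c : H.ConnectedComponent // Odd (Nat.card c.supp)} ≤
          Nat.card ({v : ↥Uᶜ // ∃ x : Fin k, v.1 = Sum.inr (Sum.inr x) ∧ x.val < a} ⊕ Unit) := by
        apply Nat.card_le_card_of_injective
          (fun c : {c : H.ConnectedComponent // Odd (Nat.card c.supp)} =>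
            if h : (∃ v : {v : ↥Uᶜ // ∃ x : Fin k, v.1 = Sum.inr (Sum.inr x) ∧ x.val < a},
              H.connectedComponentMk v.1 = ↑c) then Sum.inl h.choose else Sum.inr ())
        intro c c' hcc
        dsimp only at hcc
        ext1
        by_cases h1 : (∃ v : {v : ↥Uᶜ // ∃ x : Fin k, v.1 = Sum.inr (Sum.inr x) ∧ x.val < a},
              H.connectedComponentMk v.1 = ↑c) <;>
          by_cases h2 : (∃ v : {v : ↥Uᶜ // ∃ x : Fin k, v.1 = Sum.inr (Sum.inr x) ∧ x.val < a},
              H.connectedComponentMk v.1 = ↑c')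
        · have hw := h1.choose_spec
          have hw' := h2.choose_spec
          rw [dif_pos h1, dif_pos h2, Sum.inl.injEq] at hcc
          rw [← hw, ← hw', hcc]
        · rw [dif_pos h1, dif_neg h2] at hcc
          exact absurd hcc (by simp)
        · rw [dif_neg h1, dif_pos h2] at hcc
          exact absurd hcc (by simp)
        · -- neither component contains an X₁ vertex; reps are in X₂
          obtain ⟨v, hv⟩ := (c : H.ConnectedComponent).exists_rep
          obtain ⟨v', hv'⟩ := (c' : H.ConnectedComponent).exists_rep
          obtain ⟨y, hy, hya⟩ : ∃ y : Fin k, v.1 = Sum.inr (Sum.inr y) ∧ a ≤ y.val := by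
            rcases hvc : v.1 with i | j | y
            · exact absurd hvc ((hPat v).1 i)
            · exact absurd hvc ((hPat v).2 j)
            · refine ⟨y, rfl, ?_⟩
              by_contra hya
              exact h1 ⟨⟨v, y, hvc, by omega⟩, hv⟩
          obtain ⟨y', hy', hya'⟩ : ∃ y' : Fin k, v'.1 = Sum.inr (Sum.inr y') ∧ a ≤ y'.val := by
            rcases hvc : v'.1 with i | j | y
            · exact absurd hvc ((hPat v').1 i)
            · exact absurd hvc ((hPat v').2 j)
            · refine ⟨y, rfl, ?_⟩
              by_contra hya
              exact h2 ⟨⟨v', y, hvc, by omega⟩, hv'⟩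
          rw [← hv, ← hv']
          by_cases hvv : v = v'
          · rw [hvv]
          · apply SimpleGraph.ConnectedComponent.sound
            apply SimpleGraph.Adj.reachable
            apply hadj
            rw [hy, hy']
            apply GIAux.adj_XX hya hya'
            intro hyy
            exact hvv (Subtype.ext (by rw [hy, hy', hyy]))
      calc q ≤ _ := h2
        _ = s + 1 := by rw [Nat.card_sum, ← hs]; simp
    -- arithmetic conclusion
    rcases Nat.eq_zero_or_pos a with ha0 | ha1
    · omega
    · have : nF + nM = a + 2 * R2 := by omega
      omega
end
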